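/- arXiv:2202.00633 — 3 statements merged into one kernel-verified Lean document; each statement's English description precedes it below -/
import Mathlib

section
/- In a two-player zero-sum game, let (π^e, σ^e) be a Nash equilibrium of the game (Δ(Π_i), Δ^e) and (π^{e+1}, σ^{e+1}) a Nash equilibrium of (Δ(Π_i), Δ^{e+1}), where Δ^e ⊆ Δ^{e+1} are two sets of opponent mixed strategies. Then u_i(π^e, σ^e) − u_i(π^e, σ^{e+1}) ≥ 0. -/
theorem monotonic_policy_space_expanding_general
    {X Y : Type*} (u : X → Y → ℝ) (A : Set X) (De De1 : Set Y)
    (hsub : De ⊆ De1)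
    (πe πe1 : X) (σe σe1 : Y)
    (hπe : πe ∈ A) (hσe : σe ∈ De) (hπe1 : πe1 ∈ A)
    (hNe1 : ∀ π ∈ A, u π σe ≤ u πe σe)
    (hNe11 : ∀ π ∈ A, u π σe1 ≤ u πe1 σe1)
    (hNe12 : ∀ σ ∈ De1, u πe1 σe1 ≤ u πe1 σ) :
    u πe σe - u πe σe1 ≥ 0 := by
  -- σe stays available in the larger set De1, so the new equilibrium value lies in between.
  have : u πe σe1 ≤ u πe σe :=
    calc u πe σe1 ≤ u πe1 σe1 := hNe11 πe hπe
      _ ≤ u πe1 σe := hNe12 σe (hsub hσe)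
      _ ≤ u πe σe := hNe1 πe1 hπe1
  exact sub_nonneg.mpr this

/-- Monotonic policy space expanding: utility against the epoch-(e+1) equilibrium
meta-strategy does not exceed utility against the epoch-e one. -/
theorem monotonic_policy_space_expanding
    {X Y : Type*} (u : X → Y → ℝ) (A : Set X) (De De1 : Set Y)
    (hsub : De ⊆ De1)
    (πe πe1 : X) (σe σe1 : Y)
    (hπe : πe ∈ A) (hσe : σe ∈ De) (hπe1 : πe1 ∈ A) (hσe1 : σe1 ∈ De1)
    (hNe1 : ∀ π ∈ A, u π σe ≤ u πe σe)
    (hNe2 : ∀ σ ∈ De, u πe σe ≤ u πe σ)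
    (hNe11 : ∀ π ∈ A, u π σe1 ≤ u πe1 σe1)
    (hNe12 : ∀ σ ∈ De1, u πe1 σe1 ≤ u πe1 σ) :
    u πe σe - u πe σe1 ≥ 0 :=
  monotonic_policy_space_expanding_general u A De De1 hsub πe πe1 σe σe1 hπe hσe hπe1 hNe1 hNe11
    hNe12
end

section
/- With the setup of the monotonic expansion theorem, if additionally u_i(π^e, σ^e) − u_i(π^e, σ^{e+1}) > 0, then σ^{e+1} ∉ Δ^e, i.e., the restricted policy set has strictly expanded. -/
theorem strict_policy_space_expanding_general
    {X Y : Type*} (u : X → Y → ℝ) (De : Set Y)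
    (πe : X) (σe σe1 : Y)
    (hNe2 : ∀ σ ∈ De, u πe σe ≤ u πe σ)
    (hstrict : u πe σe - u πe σe1 > 0) :
    σe1 ∉ De :=
  fun hσe1 => by linarith [hNe2 σe1 hσe1]

/-- Strict expansion: if the utility strictly drops against the new equilibrium
meta-strategy, then the new meta-strategy lies outside the old restricted simplex. -/
theorem strict_policy_space_expanding
    {X Y : Type*} (u : X → Y → ℝ) (A : Set X) (De De1 : Set Y)
    (hsub : De ⊆ De1)
    (πe πe1 : X) (σe σe1 : Y)
    (hπe : πe ∈ A) (hσe : σe ∈ De) (hπe1 : πe1 ∈ A) (hσe1 : σe1 ∈ De1)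
    (hNe1 : ∀ π ∈ A, u π σe ≤ u πe σe)
    (hNe2 : ∀ σ ∈ De, u πe σe ≤ u πe σ)
    (hNe11 : ∀ π ∈ A, u π σe1 ≤ u πe1 σe1)
    (hNe12 : ∀ σ ∈ De1, u πe1 σe1 ≤ u πe1 σ)
    (hstrict : u πe σe - u πe σe1 > 0) :
    σe1 ∉ De :=
  strict_policy_space_expanding_general u De πe σe σe1 hNe2 hstrict
end

section
/- In a finite two-player zero-sum game with payoff matrix U for the row player, the NashConv of EPSRO-style equilibrium pairs is at most that of PSRO: if (π*_i, σ*_{-i}) is a Nash equilibrium of the unrestricted-restricted game (Δ(Π_i), Δ(Π^r_{-i})) and (σ*_i, π*_{-i}) is a Nash equilibrium of (Δ(Π^r_i), Δ(Π_{-i})), and (σ_i, σ_{-i}) is any pair of restricted-game strategies with σ_i ∈ Δ(Π^r_i), σ_{-i} ∈ Δ(Π^r_{-i}), then u_i(π*_i, σ*_{-i}) − u_i(σ*_i, π*_{-i}) ≤ max_{π_i ∈ Δ(Π_i)} u_i(π_i, σ_{-i}) − min_{π_{-i} ∈ Δ(Π_{-i})} u_i(σ_i, π_{-i}). -/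
/-!
Each equilibrium value is sandwiched by a best-response value: `σ_{-i}` is an admissible
deviation for the column player of the first equilibrium and `π*_i` an admissible reply to
`σ_{-i}`, so `u(π*_i, σ*_{-i}) ≤ u(π*_i, σ_{-i}) ≤ max_π u(π, σ_{-i})`. The symmetric bound
`min_π u(σ_i, π) ≤ u(σ*_i, π*_{-i})` is the same statement for the game with the players'
roles swapped, whose row payoff is `-u`.
-/

theorem payoff_le_bestResponse_payoff {X Y : Type*} (u : X → Y → ℝ)
    {S : Set X} {T : Set Y} {x₀ xBR : X} {y₀ y : Y} (hx₀ : x₀ ∈ S) (hy : y ∈ T)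
    (hy₀ : ∀ y' ∈ T, u x₀ y₀ ≤ u x₀ y') (hxBR : ∀ x ∈ S, u x y ≤ u xBR y) :
    u x₀ y₀ ≤ u xBR y :=
  (hy₀ y hy).trans (hxBR x₀ hx₀)

theorem epsro_nashconv_le_psro_general
    {X Y : Type*} (u : X → Y → ℝ)
    (Di Dri : Set X) (Dj Drj : Set Y)
    (πistar : X) (σjstar : Y) (σistar : X) (πjstar : Y)
    (hπistar : πistar ∈ Di)
    (hπjstar : πjstar ∈ Dj)
    -- (π*_i, σ*_{-i}) is a Nash equilibrium of the URR game (Δ(Π_i), Δ(Π^r_{-i}))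
    (h2 : ∀ σ ∈ Drj, u πistar σjstar ≤ u πistar σ)
    -- (σ*_i, π*_{-i}) is a Nash equilibrium of (Δ(Π^r_i), Δ(Π_{-i}))
    (h3 : ∀ π ∈ Dri, u π πjstar ≤ u σistar πjstar)
    -- an arbitrary pair of restricted-game strategies with their best responses
    (σi : X) (σj : Y) (hσi : σi ∈ Dri) (hσj : σj ∈ Drj)
    (πBRi : X) (hmax : ∀ π ∈ Di, u π σj ≤ u πBRi σj)
    (πBRj : Y) (hmin : ∀ σ ∈ Dj, u σi πBRj ≤ u σi σ) :
    u πistar σjstar - u σistar πjstar ≤ u πBRi σj - u σi πBRj := by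
  have hrow : u πistar σjstar ≤ u πBRi σj :=
    payoff_le_bestResponse_payoff u hπistar hσj h2 hmax
  have hcol : -u σistar πjstar ≤ -u σi πBRj :=
    payoff_le_bestResponse_payoff (fun y x => -u x y) hπjstar hσi
      (fun π hπ => neg_le_neg (h3 π hπ)) (fun σ hσ => neg_le_neg (hmin σ hσ))
  linarith

/-- EPSRO-style NashConv is at most PSRO-style NashConv. -/
theorem epsro_nashconv_le_psro
    {X Y : Type*} (u : X → Y → ℝ)
    (Di Dri : Set X) (Dj Drj : Set Y)
    (hri : Dri ⊆ Di) (hrj : Drj ⊆ Dj)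
    (πistar : X) (σjstar : Y) (σistar : X) (πjstar : Y)
    (hπistar : πistar ∈ Di) (hσjstar : σjstar ∈ Drj)
    (hσistar : σistar ∈ Dri) (hπjstar : πjstar ∈ Dj)
    -- (π*_i, σ*_{-i}) is a Nash equilibrium of the URR game (Δ(Π_i), Δ(Π^r_{-i}))
    (h1 : ∀ π ∈ Di, u π σjstar ≤ u πistar σjstar)
    (h2 : ∀ σ ∈ Drj, u πistar σjstar ≤ u πistar σ)
    -- (σ*_i, π*_{-i}) is a Nash equilibrium of (Δ(Π^r_i), Δ(Π_{-i}))
    (h3 : ∀ π ∈ Dri, u π πjstar ≤ u σistar πjstar)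
    (h4 : ∀ σ ∈ Dj, u σistar πjstar ≤ u σistar σ)
    -- an arbitrary pair of restricted-game strategies with their best responses
    (σi : X) (σj : Y) (hσi : σi ∈ Dri) (hσj : σj ∈ Drj)
    (πBRi : X) (hπBRi : πBRi ∈ Di) (hmax : ∀ π ∈ Di, u π σj ≤ u πBRi σj)
    (πBRj : Y) (hπBRj : πBRj ∈ Dj) (hmin : ∀ σ ∈ Dj, u σi πBRj ≤ u σi σ) :
    u πistar σjstar - u σistar πjstar ≤ u πBRi σj - u σi πBRj :=
  epsro_nashconv_le_psro_general u Di Dri Dj Drj πistar σjstar σistar πjstar hπistar hπjstar h2 h3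
    σi σj hσi hσj πBRi hmax πBRj hmin
end
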